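/- (Proposition 2.1(i).) Under the stated assumptions on u, for every δ > 0 there exists d^δ ∈ (0,∞), with d^δ → ∞ as δ → 0, such that with z^δ(x) = (−p̄(x), d^δ) one has, for every x ∈ Ḡ: the infimum over y ∈ H of ψ(x,y,z^δ(x)) equals the minimum over y ∈ S^{m−1}×{0} of ψ(x,y,z^δ(x)), and this common value lies in the interval [−δ, 0]. -/
import Mathlib

open scoped RealInnerProductSpace

noncomputable section

def mv {m : ℕ} (S : Matrix (Fin m) (Fin m) ℝ) (v : EuclideanSpace ℝ (Fin m)) :
    EuclideanSpace ℝ (Fin m) := Matrix.toEuclideanLin S v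

def phi {m : ℕ} (a b : EuclideanSpace ℝ (Fin m)) (c d : ℝ)
    (p : EuclideanSpace ℝ (Fin m)) (S : Matrix (Fin m) (Fin m) ℝ) : ℝ :=
  -(1 / 2) * ⟪a - b, mv S (a - b)⟫ - (c + d) * ⟪a + b, p⟫

def Hset (m : ℕ) : Set (EuclideanSpace ℝ (Fin m) × ℝ) :=
  {y | ‖y.1‖ = 1 ∧ 0 ≤ y.2}

def Dinf {m : ℕ} (p : EuclideanSpace ℝ (Fin m)) (S : Matrix (Fin m) (Fin m) ℝ) : ℝ :=
  (‖p‖ ^ 2)⁻¹ * ⟪p, mv S p⟫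

def hfun {m : ℕ} (p : EuclideanSpace ℝ (Fin m)) (S : Matrix (Fin m) (Fin m) ℝ) : ℝ :=
  -2 * Dinf p S

def psi {m : ℕ} (p : EuclideanSpace ℝ (Fin m)) (S : Matrix (Fin m) (Fin m) ℝ)
    (y z : EuclideanSpace ℝ (Fin m) × ℝ) : ℝ :=
  -(hfun p S) + phi y.1 z.1 y.2 z.2 p S

lemma mv_smul {m : ℕ} (S : Matrix (Fin m) (Fin m) ℝ) (r : ℝ)
    (v : EuclideanSpace ℝ (Fin m)) : mv S (r • v) = r • mv S v :=
  map_smul (Matrix.toEuclideanLin S) r v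

lemma mv_sub {m : ℕ} (S : Matrix (Fin m) (Fin m) ℝ)
    (v w : EuclideanSpace ℝ (Fin m)) : mv S (v - w) = mv S v - mv S w :=
  map_sub (Matrix.toEuclideanLin S) v w

lemma psi_expand {m : ℕ} (p pb : EuclideanSpace ℝ (Fin m)) (S : Matrix (Fin m) (Fin m) ℝ)
    (a : EuclideanSpace ℝ (Fin m)) (c dN : ℝ) :
    psi p S (a, c) (-pb, dN) =
      2 * Dinf p S - (1/2) * ⟪a + pb, mv S (a + pb)⟫ - (c + dN) * ⟪a - pb, p⟫ := by
  simp only [psi, phi, hfun, sub_neg_eq_add, ← sub_eq_add_neg]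
  ring

lemma quad_lower (M t D Q1 I1 I2 : ℝ) (hdiff : Q1 - 4 * D = I1 + I2)
    (b1 : |I1| ≤ 2 * (M * t)) (b2 : |I2| ≤ t * (M * 2)) :
    -(2 * M * t) ≤ 2 * D - (1/2) * Q1 := by
  have h1 := abs_le.mp b1
  have h2 := abs_le.mp b2
  linarith [h1.1, h1.2, h2.1, h2.2]

lemma final_ineq (D Q1 ipa P N δ M t : ℝ)
    (hqlow : -(2 * M * t) ≤ 2 * D - (1/2) * Q1)
    (h1 : t ^ 2 * P = 2 * P - 2 * ipa)
    (hNPδ : 2 * M ^ 2 ≤ N * P * δ) (hNP : 0 < N * P)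
    (hδ : 0 < δ) (ht0 : 0 ≤ t) (hM0 : 0 ≤ M) :
    -δ ≤ 2 * D - (1/2) * Q1 - (0 + N) * (ipa - P) := by
  have key : -δ ≤ -(2 * M * t) + N * P * t ^ 2 / 2 := by
    nlinarith [sq_nonneg (N * P * t - 2 * M), hNP, hNPδ, hδ, mul_pos hNP hδ]
  have h2 : N * (ipa - P) = -(N * P * t ^ 2 / 2) := by
    have e : ipa - P = -(t ^ 2 * P / 2) := by linarith
    rw [e]; ring
  linarith [key, hqlow, h2]

set_option maxHeartbeats 2000000 in
/-- Proposition 2.1(i): for every `δ > 0` there is `d^δ ∈ (0,∞)`, with `d^δ → ∞` as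
`δ → 0`, such that for `z^δ(x) = (−p̄(x), d^δ)` and every `x ∈ Ḡ` the infimum over
`y ∈ H` of `ψ(x,y,z^δ(x))` equals the attained minimum over `y ∈ S^{m−1} × {0}`,
and this common value lies in `[−δ, 0]`. -/
theorem stmt7 {m : ℕ} (hm : 2 ≤ m)
    (G U : Set (EuclideanSpace ℝ (Fin m))) (hGopen : IsOpen G)
    (hGbdd : Bornology.IsBounded G) (hUopen : IsOpen U) (hGU : closure G ⊆ U)
    (u : EuclideanSpace ℝ (Fin m) → ℝ) (hu : ContDiffOn ℝ 2 u U)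
    (Du : EuclideanSpace ℝ (Fin m) → EuclideanSpace ℝ (Fin m))
    (hDu : ∀ x ∈ U, HasGradientAt u (Du x) x)
    (S : EuclideanSpace ℝ (Fin m) → Matrix (Fin m) (Fin m) ℝ)
    (hSsymm : ∀ x ∈ U, (S x).IsSymm)
    (hS : ∀ x ∈ U, HasFDerivAt Du
      (LinearMap.toContinuousLinearMap (Matrix.toEuclideanLin (S x))) x)
    (hp : ∀ x ∈ closure G, Du x ≠ 0)
    (hh : ∀ x ∈ closure G, hfun (Du x) (S x) ≠ 0)
    :
    ∃ dd : ℝ → ℝ, (∀ δ : ℝ, 0 < δ → 0 < dd δ) ∧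
      Filter.Tendsto dd (nhdsWithin 0 (Set.Ioi 0)) Filter.atTop ∧
      ∀ δ : ℝ, 0 < δ → ∀ x ∈ closure G,
        ∃ a₀ : EuclideanSpace ℝ (Fin m), ‖a₀‖ = 1 ∧
          (∀ a : EuclideanSpace ℝ (Fin m), ‖a‖ = 1 →
            psi (Du x) (S x) (a₀, 0) (-(‖Du x‖⁻¹ • Du x), dd δ)
              ≤ psi (Du x) (S x) (a, 0) (-(‖Du x‖⁻¹ • Du x), dd δ)) ∧
          (⨅ y ∈ Hset m, ((psi (Du x) (S x) y (-(‖Du x‖⁻¹ • Du x), dd δ) : ℝ) : EReal))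
            = ((psi (Du x) (S x) (a₀, 0) (-(‖Du x‖⁻¹ • Du x), dd δ) : ℝ) : EReal) ∧
          psi (Du x) (S x) (a₀, 0) (-(‖Du x‖⁻¹ • Du x), dd δ) ∈ Set.Icc (-δ) 0 := by
  classical
  by_cases hne : (closure G).Nonempty
  swap
  · refine ⟨fun δ => δ⁻¹, fun δ hδ => by positivity, tendsto_inv_nhdsGT_zero, ?_⟩
    intro δ hδ x hx
    exact absurd ⟨x, hx⟩ hne
  -- regularity of Du
  have hgrad : ∀ x ∈ U, Du x = (InnerProductSpace.toDual ℝ (EuclideanSpace ℝ (Fin m))).symm (fderiv ℝ u x) := by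
    intro x hxU
    have h1 : HasFDerivAt u ((InnerProductSpace.toDual ℝ (EuclideanSpace ℝ (Fin m))) (Du x)) x :=
      (hDu x hxU).hasFDerivAt
    rw [h1.fderiv]
    simp
  have hDuC1 : ContDiffOn ℝ 1 Du U := by
    have h1 : ContDiffOn ℝ 1 (fderiv ℝ u) U := ContDiffOn.fderiv_of_isOpen (m := 1) hu hUopen (by norm_num)
    have h2 : ContDiffOn ℝ 1
        (fun x => (InnerProductSpace.toDual ℝ (EuclideanSpace ℝ (Fin m))).symm (fderiv ℝ u x)) U := by
      exact ((InnerProductSpace.toDual ℝ (EuclideanSpace ℝ (Fin m))).symm.toContinuousLinearEquiv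
        : (EuclideanSpace ℝ (Fin m) →L[ℝ] ℝ) ≃L[ℝ] EuclideanSpace ℝ (Fin m)).toContinuousLinearMap.contDiff.comp_contDiffOn h1
    exact h2.congr fun x hx => hgrad x hx
  have hFcont : ContinuousOn (fderiv ℝ Du) U :=
    hDuC1.continuousOn_fderiv_of_isOpen hUopen le_rfl
  have hK : IsCompact (closure G) := hGbdd.isCompact_closure
  -- bounds M and ρ
  obtain ⟨xM, hxMmem, hxM⟩ :=
    hK.exists_isMaxOn hne ((hFcont.mono hGU).norm)
  set M : ℝ := ‖fderiv ℝ Du xM‖ with hMdef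
  have hM : ∀ x ∈ closure G, ‖fderiv ℝ Du x‖ ≤ M := fun x hx => hxM hx
  have hM0 : 0 ≤ M := norm_nonneg _
  obtain ⟨xr, hxrmem, hxr⟩ :=
    hK.exists_isMinOn hne (((hDuC1.continuousOn).mono hGU).norm)
  set ρ : ℝ := ‖Du xr‖ with hρdef
  have hρ : 0 < ρ := norm_pos_iff.mpr (hp xr hxrmem)
  have hρle : ∀ x ∈ closure G, ρ ≤ ‖Du x‖ := fun x hx => hxr hx
  refine ⟨fun δ => ((ρ + 2 * M ^ 2) / ρ) * δ⁻¹, ?_, ?_, ?_⟩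
  · intro δ hδ; positivity
  · exact Filter.Tendsto.const_mul_atTop (by positivity) tendsto_inv_nhdsGT_zero
  intro δ hδ x hx
  have hxU := hGU hx
  set p : EuclideanSpace ℝ (Fin m) := Du x with hpdef
  set P : ℝ := ‖p‖ with hPdef
  have hP : 0 < P := norm_pos_iff.mpr (hp x hx)
  set pb : EuclideanSpace ℝ (Fin m) := P⁻¹ • p with hpbdef
  have hpb1 : ‖pb‖ = 1 := by
    rw [hpbdef, norm_smul, norm_inv, norm_norm, ← hPdef, inv_mul_cancel₀ hP.ne']
  set N : ℝ := ((ρ + 2 * M ^ 2) / ρ) * δ⁻¹ with hNdef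
  have hN : 0 < N := by positivity
  -- bound on mv (S x)
  have hfd : (LinearMap.toContinuousLinearMap (Matrix.toEuclideanLin (S x)))
      = fderiv ℝ Du x := ((hS x hxU).fderiv).symm
  have hmv : ∀ v : EuclideanSpace ℝ (Fin m), ‖mv (S x) v‖ ≤ M * ‖v‖ := by
    intro v
    have h1 : mv (S x) v = (fderiv ℝ Du x) v := by rw [← hfd]; rfl
    rw [h1]
    calc ‖(fderiv ℝ Du x) v‖ ≤ ‖fderiv ℝ Du x‖ * ‖v‖ := (fderiv ℝ Du x).le_opNorm v
      _ ≤ M * ‖v‖ := mul_le_mul_of_nonneg_right (hM x hx) (norm_nonneg v)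
  -- basic inner product facts
  have hQpb : ⟪pb, mv (S x) pb⟫ = Dinf p (S x) := by
    rw [hpbdef, mv_smul, real_inner_smul_left, real_inner_smul_right, Dinf, ← hPdef]
    ring
  have hpbp : ⟪pb, p⟫ = P := by
    rw [hpbdef, real_inner_smul_left, real_inner_self_eq_norm_sq, ← hPdef, sq,
      inv_mul_cancel_left₀ hP.ne']
  -- value at pb is 0
  have hzero : psi p (S x) (pb, 0) (-pb, N) = 0 := by
    rw [psi_expand]
    have e1 : pb + pb = (2:ℝ) • pb := (two_smul ℝ pb).symm
    rw [e1, mv_smul, real_inner_smul_left, real_inner_smul_right, hQpb, sub_self]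
    simp only [inner_zero_left]
    ring
  -- monotonicity in c
  have hmono : ∀ (a : EuclideanSpace ℝ (Fin m)) (c : ℝ), ‖a‖ = 1 → 0 ≤ c →
      psi p (S x) (a, 0) (-pb, N) ≤ psi p (S x) (a, c) (-pb, N) := by
    intro a c ha hc
    rw [psi_expand, psi_expand]
    have hip : ⟪a - pb, p⟫ ≤ 0 := by
      have h1 : ⟪a, p⟫ ≤ P := by
        calc ⟪a, p⟫ ≤ ‖a‖ * ‖p‖ := real_inner_le_norm a p
          _ = P := by rw [ha, one_mul]
      rw [inner_sub_left, hpbp]; linarith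
    nlinarith [mul_nonneg hc (neg_nonneg.mpr hip)]
  -- lower bound -δ
  have hlow : ∀ a : EuclideanSpace ℝ (Fin m), ‖a‖ = 1 → -δ ≤ psi p (S x) (a, 0) (-pb, N) := by
    intro a ha
    set t : ℝ := ‖a - pb‖ with htdef
    have ht0 : 0 ≤ t := norm_nonneg _
    have hip : ⟪a - pb, p⟫ = ⟪a, p⟫ - P := by rw [inner_sub_left, hpbp]
    have h1 : t ^ 2 * P = 2 * P - 2 * ⟪a, p⟫ := by
      have e : t ^ 2 = 2 - 2 * (P⁻¹ * ⟪a, p⟫) := by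
        rw [htdef, norm_sub_sq_real, ha, hpb1, hpbdef, real_inner_smul_right]
        ring
      rw [e]
      field_simp
    -- quadratic bound
    have hqlow : -(2 * M * t) ≤ 2 * Dinf p (S x) - (1/2) * ⟪a + pb, mv (S x) (a + pb)⟫ := by
      have hvw : (a + pb) - (2:ℝ) • pb = a - pb := by
        rw [two_smul]; abel
      have hexp : ⟪a + pb, mv (S x) (a + pb)⟫ - ⟪(2:ℝ) • pb, mv (S x) ((2:ℝ) • pb)⟫
          = ⟪a + pb, mv (S x) (a - pb)⟫ + ⟪a - pb, mv (S x) ((2:ℝ) • pb)⟫ := by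
        rw [← hvw, mv_sub, inner_sub_right, inner_sub_left]
        ring
      have h2Q : ⟪(2:ℝ) • pb, mv (S x) ((2:ℝ) • pb)⟫ = 4 * Dinf p (S x) := by
        rw [mv_smul, real_inner_smul_left, real_inner_smul_right, hQpb]; ring
      have b1 : |⟪a + pb, mv (S x) (a - pb)⟫| ≤ 2 * (M * t) := by
        calc |⟪a + pb, mv (S x) (a - pb)⟫| ≤ ‖a + pb‖ * ‖mv (S x) (a - pb)‖ :=
              abs_real_inner_le_norm _ _
          _ ≤ 2 * (M * t) := by
              apply mul_le_mul _ _ (norm_nonneg _) (by norm_num)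
              · calc ‖a + pb‖ ≤ ‖a‖ + ‖pb‖ := norm_add_le _ _
                  _ = 2 := by rw [ha, hpb1]; norm_num
              · exact hmv (a - pb)
      have b2 : |⟪a - pb, mv (S x) ((2:ℝ) • pb)⟫| ≤ t * (M * 2) := by
        calc |⟪a - pb, mv (S x) ((2:ℝ) • pb)⟫| ≤ ‖a - pb‖ * ‖mv (S x) ((2:ℝ) • pb)‖ :=
              abs_real_inner_le_norm _ _
          _ ≤ t * (M * 2) := by
              apply mul_le_mul (le_of_eq htdef.symm) _ (norm_nonneg _) ht0
              calc ‖mv (S x) ((2:ℝ) • pb)‖ ≤ M * ‖(2:ℝ) • pb‖ := hmv _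
                _ = M * 2 := by rw [norm_smul, hpb1]; norm_num
      have hdiff : ⟪a + pb, mv (S x) (a + pb)⟫ - 4 * Dinf p (S x)
          = ⟪a + pb, mv (S x) (a - pb)⟫ + ⟪a - pb, mv (S x) ((2:ℝ) • pb)⟫ := by
        rw [← h2Q, hexp]
      exact quad_lower M t _ _ _ _ hdiff b1 b2
    have hNPδ : 2 * M ^ 2 ≤ N * P * δ := by
      have e : N * P * δ = (ρ + 2 * M ^ 2) * (P / ρ) := by
        rw [hNdef]; field_simp
      have h1 : (1:ℝ) ≤ P / ρ := (one_le_div hρ).mpr (hρle x hx)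
      nlinarith [h1, hρ, hM0]
    rw [psi_expand, hip]
    exact final_ineq _ _ _ _ _ _ _ _ hqlow h1 hNPδ (mul_pos hN hP) hδ ht0 hM0
  -- minimizer over sphere
  have hTcont : Continuous (mv (S x)) := by
    have : mv (S x) = fun v => (LinearMap.toContinuousLinearMap
        (Matrix.toEuclideanLin (S x))) v := rfl
    rw [this]
    exact (LinearMap.toContinuousLinearMap (Matrix.toEuclideanLin (S x))).continuous
  have hcont : Continuous (fun a : EuclideanSpace ℝ (Fin m) => psi p (S x) (a, 0) (-pb, N)) := by
    simp only [psi_expand]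
    refine (Continuous.sub continuous_const ?_).sub ?_
    · exact continuous_const.mul ((continuous_id.add continuous_const).inner
        (hTcont.comp (continuous_id.add continuous_const)))
    · exact continuous_const.mul ((continuous_id.sub continuous_const).inner
        continuous_const)
  have hsphne : (Metric.sphere (0:EuclideanSpace ℝ (Fin m)) 1).Nonempty := by
    haveI : NeZero m := ⟨by omega⟩
    refine ⟨EuclideanSpace.single (0 : Fin m) (1:ℝ), ?_⟩
    rw [mem_sphere_zero_iff_norm, EuclideanSpace.norm_single]
    norm_num
  obtain ⟨a₀, ha₀s, ha₀min⟩ :=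
    (isCompact_sphere (0:EuclideanSpace ℝ (Fin m)) 1).exists_isMinOn hsphne hcont.continuousOn
  have ha₀1 : ‖a₀‖ = 1 := mem_sphere_zero_iff_norm.mp ha₀s
  have hminall : ∀ a : EuclideanSpace ℝ (Fin m), ‖a‖ = 1 → psi p (S x) (a₀, 0) (-pb, N)
      ≤ psi p (S x) (a, 0) (-pb, N) := by
    intro a ha
    exact ha₀min (mem_sphere_zero_iff_norm.mpr ha)
  refine ⟨a₀, ha₀1, hminall, ?_, ?_, ?_⟩
  · -- infimum computation
    apply le_antisymm
    · exact iInf₂_le (a₀, (0:ℝ)) ⟨ha₀1, le_refl 0⟩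
    · refine le_iInf₂ fun y hy => ?_
      obtain ⟨hy1, hy2⟩ := hy
      have hle : psi p (S x) (a₀, 0) (-pb, N) ≤ psi p (S x) y (-pb, N) := by
        have e : y = (y.1, y.2) := rfl
        rw [e]
        calc psi p (S x) (a₀, 0) (-pb, N) ≤ psi p (S x) (y.1, 0) (-pb, N) :=
              hminall y.1 hy1
          _ ≤ psi p (S x) (y.1, y.2) (-pb, N) := hmono y.1 y.2 hy1 hy2
      exact_mod_cast hle
  · exact hlow a₀ ha₀1
  · calc psi p (S x) (a₀, 0) (-pb, N) ≤ psi p (S x) (pb, 0) (-pb, N) := hminall pb hpb1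
      _ = 0 := hzero

end
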